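/- arXiv:2202.07769 — 4 statements merged into one kernel-verified Lean document; each statement's English description precedes it below -/
import Mathlib

section
/- Let m ≥ 1 and let A be an m×m complex matrix that is symmetric (Aᵀ = A) and all of whose entries belong to the two-element set {−1+i, −1−i}. Then every eigenvalue λ of A satisfies −m ≤ Re(λ) ≤ 0 and −m ≤ Im(λ) ≤ m. -/
/-!
If `A v = λ v` with `v ≠ 0`, then `λ ‖v‖² = v* A v`. A complex symmetric matrix splits as
`A = Re A + i Im A` with `Re A`, `Im A` real symmetric, hence Hermitian, so their quadratic forms
are real: `Re λ ‖v‖² = v* (Re A) v` and `Im λ ‖v‖² = v* (Im A) v`. If the entries of `M` have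
modulus at most `c`, then `|v* M v| ≤ c (∑ |vⱼ|)² ≤ c m ‖v‖²`, which gives `|Re λ|, |Im λ| ≤ m`
here; and `Re A = -𝟙 𝟙ᴴ` is negative semidefinite, which gives `Re λ ≤ 0`.
-/

open Matrix
open scoped ComplexOrder

namespace Matrix

variable {n : Type*}

theorem IsSymm.isHermitian_map_ofReal_comp {A : Matrix n n ℂ} (hA : A.IsSymm) (f : ℂ → ℝ) :
    (A.map fun z => (f z : ℂ)).IsHermitian := by
  ext j k
  simp [hA.apply k j]

theorem eq_map_re_add_I_smul_map_im (A : Matrix n n ℂ) :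
    A = A.map (fun z => (z.re : ℂ)) + Complex.I • A.map (fun z => (z.im : ℂ)) := by
  ext j k
  rw [add_apply, smul_apply, map_apply, map_apply, smul_eq_mul, mul_comm, Complex.re_add_im]

variable [Fintype n]

section RCLike

variable {𝕜 : Type*} [RCLike 𝕜]

theorem star_dotProduct_self_eq_sum_norm_sq (v : n → 𝕜) :
    star v ⬝ᵥ v = ((∑ j, ‖v j‖ ^ 2 : ℝ) : 𝕜) := by
  simp [dotProduct, RCLike.conj_mul]

theorem exists_star_dotProduct_mulVec_eq_mul_sum_norm_sq [DecidableEq n] {A : Matrix n n 𝕜}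
    {μ : 𝕜} (h : (μ • (1 : Matrix n n 𝕜) - A).det = 0) :
    ∃ v : n → 𝕜, 0 < ∑ j, ‖v j‖ ^ 2 ∧
      star v ⬝ᵥ A *ᵥ v = μ * ((∑ j, ‖v j‖ ^ 2 : ℝ) : 𝕜) := by
  obtain ⟨v, hv0, hv⟩ := exists_mulVec_eq_zero_iff.2 h
  rw [sub_mulVec, sub_eq_zero, smul_mulVec, one_mulVec] at hv
  have hpos := dotProduct_star_self_pos_iff.2 hv0
  rw [star_dotProduct_self_eq_sum_norm_sq] at hpos
  refine ⟨v, RCLike.ofReal_pos.1 hpos, ?_⟩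
  rw [← hv, dotProduct_smul, smul_eq_mul, star_dotProduct_self_eq_sum_norm_sq]

theorem norm_star_dotProduct_mulVec_le {M : Matrix n n 𝕜} {c : ℝ} (hM : ∀ j k, ‖M j k‖ ≤ c)
    (v : n → 𝕜) : ‖star v ⬝ᵥ M *ᵥ v‖ ≤ c * Fintype.card n * ∑ j, ‖v j‖ ^ 2 := by
  rcases isEmpty_or_nonempty n with hn | ⟨⟨j₀⟩⟩
  · simp
  have hc : 0 ≤ c := (norm_nonneg _).trans (hM j₀ j₀)
  calc ‖star v ⬝ᵥ M *ᵥ v‖ ≤ ∑ j, ∑ k, ‖v j‖ * (c * ‖v k‖) := by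
        simp only [dotProduct, mulVec, Finset.mul_sum]
        refine (norm_sum_le _ _).trans (Finset.sum_le_sum fun j _ => (norm_sum_le _ _).trans
          (Finset.sum_le_sum fun k _ => ?_))
        rw [norm_mul, norm_mul, Pi.star_apply, norm_star]
        gcongr
        exact hM j k
    _ = c * (∑ j, ‖v j‖) ^ 2 := by
        rw [sq, Finset.sum_mul_sum, Finset.mul_sum]
        simp only [Finset.mul_sum]
        exact Finset.sum_congr rfl fun j _ => Finset.sum_congr rfl fun k _ => by ring
    _ ≤ c * Fintype.card n * ∑ j, ‖v j‖ ^ 2 := by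
        rw [mul_assoc]
        gcongr
        exact sq_sum_le_card_mul_sum_sq

end RCLike

theorem star_dotProduct_mulVec_eq_re_add_I_mul_im (A : Matrix n n ℂ) (v : n → ℂ) :
    star v ⬝ᵥ A *ᵥ v = star v ⬝ᵥ A.map (fun z => (z.re : ℂ)) *ᵥ v
      + Complex.I * (star v ⬝ᵥ A.map (fun z => (z.im : ℂ)) *ᵥ v) := by
  conv_lhs => rw [A.eq_map_re_add_I_smul_map_im]
  rw [add_mulVec, smul_mulVec, dotProduct_add, dotProduct_smul, smul_eq_mul]

namespace IsSymm

variable {A : Matrix n n ℂ}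

theorem re_star_dotProduct_mulVec (hA : A.IsSymm) (v : n → ℂ) :
    (star v ⬝ᵥ A *ᵥ v).re = (star v ⬝ᵥ A.map (fun z => (z.re : ℂ)) *ᵥ v).re := by
  have him := (hA.isHermitian_map_ofReal_comp Complex.im).im_star_dotProduct_mulVec_self v
  rw [star_dotProduct_mulVec_eq_re_add_I_mul_im]
  simp_all

theorem im_star_dotProduct_mulVec (hA : A.IsSymm) (v : n → ℂ) :
    (star v ⬝ᵥ A *ᵥ v).im = (star v ⬝ᵥ A.map (fun z => (z.im : ℂ)) *ᵥ v).re := by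
  have hre := (hA.isHermitian_map_ofReal_comp Complex.re).im_star_dotProduct_mulVec_self v
  rw [star_dotProduct_mulVec_eq_re_add_I_mul_im]
  simp_all

theorem abs_re_star_dotProduct_map_mulVec_le {f : ℂ → ℝ} {c : ℝ} (hc : ∀ j k, |f (A j k)| ≤ c)
    (v : n → ℂ) :
    |(star v ⬝ᵥ A.map (fun z => (f z : ℂ)) *ᵥ v).re| ≤ c * Fintype.card n * ∑ j, ‖v j‖ ^ 2 :=
  (Complex.abs_re_le_norm _).trans (norm_star_dotProduct_mulVec_le (by simpa using hc) v)

variable [DecidableEq n] {μ : ℂ}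

theorem exists_re_im_mul_sum_norm_sq_eq (hA : A.IsSymm)
    (h : (μ • (1 : Matrix n n ℂ) - A).det = 0) :
    ∃ v : n → ℂ, 0 < ∑ j, ‖v j‖ ^ 2 ∧
      μ.re * ∑ j, ‖v j‖ ^ 2 = (star v ⬝ᵥ A.map (fun z => (z.re : ℂ)) *ᵥ v).re ∧
      μ.im * ∑ j, ‖v j‖ ^ 2 = (star v ⬝ᵥ A.map (fun z => (z.im : ℂ)) *ᵥ v).re := by
  obtain ⟨v, hN, hv⟩ := exists_star_dotProduct_mulVec_eq_mul_sum_norm_sq h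
  refine ⟨v, hN, ?_, ?_⟩
  · rw [← hA.re_star_dotProduct_mulVec, hv]
    exact (RCLike.re_mul_ofReal μ _).symm
  · rw [← hA.im_star_dotProduct_mulVec, hv]
    exact (RCLike.im_mul_ofReal μ _).symm

theorem abs_re_le_of_det_eq_zero (hA : A.IsSymm) {c : ℝ} (hc : ∀ j k, |(A j k).re| ≤ c)
    (h : (μ • (1 : Matrix n n ℂ) - A).det = 0) : |μ.re| ≤ c * Fintype.card n := by
  obtain ⟨v, hN, hre, -⟩ := hA.exists_re_im_mul_sum_norm_sq_eq h
  refine le_of_mul_le_mul_right ?_ hN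
  calc |μ.re| * ∑ j, ‖v j‖ ^ 2 = |μ.re * ∑ j, ‖v j‖ ^ 2| := by rw [abs_mul, abs_of_pos hN]
    _ ≤ c * Fintype.card n * ∑ j, ‖v j‖ ^ 2 := by
      rw [hre]
      exact abs_re_star_dotProduct_map_mulVec_le hc v

theorem abs_im_le_of_det_eq_zero (hA : A.IsSymm) {c : ℝ} (hc : ∀ j k, |(A j k).im| ≤ c)
    (h : (μ • (1 : Matrix n n ℂ) - A).det = 0) : |μ.im| ≤ c * Fintype.card n := by
  obtain ⟨v, hN, -, him⟩ := hA.exists_re_im_mul_sum_norm_sq_eq h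
  refine le_of_mul_le_mul_right ?_ hN
  calc |μ.im| * ∑ j, ‖v j‖ ^ 2 = |μ.im * ∑ j, ‖v j‖ ^ 2| := by rw [abs_mul, abs_of_pos hN]
    _ ≤ c * Fintype.card n * ∑ j, ‖v j‖ ^ 2 := by
      rw [him]
      exact abs_re_star_dotProduct_map_mulVec_le hc v

theorem re_nonpos_of_det_eq_zero (hA : A.IsSymm)
    (hre : (-A.map fun z => (z.re : ℂ)).PosSemidef)
    (h : (μ • (1 : Matrix n n ℂ) - A).det = 0) : μ.re ≤ 0 := by
  obtain ⟨v, hN, hμ, -⟩ := hA.exists_re_im_mul_sum_norm_sq_eq h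
  have hneg := hre.re_dotProduct_nonneg v
  rw [neg_mulVec, dotProduct_neg, map_neg, neg_nonneg] at hneg
  exact nonpos_of_mul_nonpos_left (hμ.trans_le hneg) hN

end IsSymm

end Matrix

theorem bohemian_symmetric_strip_general
    (m : ℕ) (A : Matrix (Fin m) (Fin m) ℂ)
    (hsym : A.transpose = A)
    (hent : ∀ j k : Fin m, A j k = -1 + Complex.I ∨ A j k = -1 - Complex.I)
    (lam : ℂ)
    (heig : Matrix.det (lam • (1 : Matrix (Fin m) (Fin m) ℂ) - A) = 0) :
    -(m : ℝ) ≤ lam.re ∧ lam.re ≤ 0 ∧ -(m : ℝ) ≤ lam.im ∧ lam.im ≤ (m : ℝ) := by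
  have hA : A.IsSymm := hsym
  have hre : ∀ j k, |(A j k).re| ≤ 1 := fun j k => by rcases hent j k with h | h <;> simp [h]
  have him : ∀ j k, |(A j k).im| ≤ 1 := fun j k => by rcases hent j k with h | h <;> simp [h]
  have hpsd : (-A.map fun z => (z.re : ℂ)).PosSemidef := by
    convert posSemidef_vecMulVec_self_star (1 : Fin m → ℂ) using 1
    ext j k
    rcases hent j k with h | h <;> simp [h]
  have hre_abs := hA.abs_re_le_of_det_eq_zero hre heig
  have him_abs := hA.abs_im_le_of_det_eq_zero him heig
  rw [one_mul, Fintype.card_fin, abs_le] at hre_abs him_abs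
  exact ⟨hre_abs.1, hA.re_nonpos_of_det_eq_zero hpsd heig, him_abs⟩

/-- Let `m ≥ 1` and let `A` be an `m × m` complex matrix that is
symmetric (`Aᵀ = A`) and all of whose entries belong to `{−1+i, −1−i}`.
Then every eigenvalue `λ` of `A` (i.e. `det (λ•I − A) = 0`) satisfies
`−m ≤ Re λ ≤ 0` and `−m ≤ Im λ ≤ m`. -/
theorem bohemian_symmetric_strip
    (m : ℕ) (hm : 1 ≤ m) (A : Matrix (Fin m) (Fin m) ℂ)
    (hsym : A.transpose = A)
    (hent : ∀ j k : Fin m, A j k = -1 + Complex.I ∨ A j k = -1 - Complex.I)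
    (lam : ℂ)
    (heig : Matrix.det (lam • (1 : Matrix (Fin m) (Fin m) ℂ) - A) = 0) :
    -(m : ℝ) ≤ lam.re ∧ lam.re ≤ 0 ∧ -(m : ℝ) ≤ lam.im ∧ lam.im ≤ (m : ℝ) :=
  bohemian_symmetric_strip_general m A hsym hent lam heig
end

section
/- Let m ≥ 1 and let A be an m×m complex matrix that is skew-symmetric (Aᵀ = −A) and tridiagonal (A_{j,k} = 0 whenever |j − k| > 1), and whose superdiagonal entries A_{j,j+1} all belong to the two-element set {1, i}. Then every eigenvalue λ of A satisfies |Re(λ)| + |Im(λ)| ≤ 2; that is, the eigenvalues are confined to a diamond (a square rotated by π/4). -/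
/-!
If `B v = μ v` with `v ≠ 0`, then `Re (v* B v) = Re μ · ‖v‖²`. For skew-symmetric `B` the real
parts of the entries cancel in `Re (v* B v)`, leaving `-∑ Im B_jk · Im (v̄_j v_k)`, so by the Schur
test `|Re μ|` is at most the largest row sum of `|Im B_jk|`; for tridiagonal `B` whose
superdiagonal entries have imaginary part in `[-1, 1]` this is at most 2. Multiplying `A` by
`1 ∓ i` turns the superdiagonal entries `1, i` into numbers of imaginary part `±1`, so
`|Re λ + Im λ| = |Re ((1 - i) λ)| ≤ 2` and `|Re λ - Im λ| = |Re ((1 + i) λ)| ≤ 2`.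
-/

open Finset Matrix

theorem sum_sum_mul_mul_le_of_sum_le {ι : Type*} [Fintype ι] (w : ι → ι → ℝ) (x : ι → ℝ)
    {R : ℝ} (hw : ∀ j k, 0 ≤ w j k) (hrow : ∀ j, ∑ k, w j k ≤ R) (hcol : ∀ k, ∑ j, w j k ≤ R) :
    ∑ j, ∑ k, w j k * (x j * x k) ≤ R * ∑ j, x j ^ 2 := by
  calc ∑ j, ∑ k, w j k * (x j * x k)
      ≤ ∑ j, ∑ k, (w j k * x j ^ 2 / 2 + w j k * x k ^ 2 / 2) := by
        gcongr with j _ k _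
        nlinarith [mul_nonneg (hw j k) (sq_nonneg (x j - x k))]
    _ = (∑ j, (∑ k, w j k) * x j ^ 2) / 2 + (∑ k, (∑ j, w j k) * x k ^ 2) / 2 := by
        simp only [sum_add_distrib, sum_mul, sum_div]
        rw [sum_comm (f := fun j k => w j k * x k ^ 2 / 2)]
    _ ≤ (∑ j, R * x j ^ 2) / 2 + (∑ k, R * x k ^ 2) / 2 := by
        gcongr with j _ k _
        · exact hrow j
        · exact hcol k
    _ = R * ∑ j, x j ^ 2 := by rw [mul_sum]; ring

theorem Matrix.re_star_dotProduct_mulVec_of_transpose_eq_neg {ι : Type*} [Fintype ι]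
    {B : Matrix ι ι ℂ} (hB : Bᵀ = -B) (v : ι → ℂ) :
    (star v ⬝ᵥ B *ᵥ v).re = -∑ j, ∑ k, (B j k).im * (star (v j) * v k).im := by
  set w : ι → ι → ℂ := fun j k => star (v j) * v k with hw
  have hswap : ∀ j k, (B k j).re * (w k j).re = -((B j k).re * (w j k).re) := fun j k => by
    rw [← transpose_apply B j k, hB, neg_apply]
    simp only [hw, Complex.neg_re, Complex.mul_re, Complex.star_def, Complex.conj_re,
      Complex.conj_im]
    ring
  have hre_sum : ∑ j, ∑ k, (B j k).re * (w j k).re = -∑ j, ∑ k, (B j k).re * (w j k).re := by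
    conv_lhs => rw [sum_comm]
    simp only [← sum_neg_distrib]
    exact sum_congr rfl fun k _ => sum_congr rfl fun j _ => hswap k j
  have hexpand : (star v ⬝ᵥ B *ᵥ v).re
      = ∑ j, ∑ k, ((B j k).re * (w j k).re - (B j k).im * (w j k).im) := by
    simp only [hw, dotProduct, mulVec, mul_sum, Complex.re_sum, Pi.star_apply]
    refine sum_congr rfl fun j _ => sum_congr rfl fun k _ => ?_
    rw [mul_left_comm, Complex.mul_re]
  rw [hexpand, sum_congr rfl fun j _ => sum_sub_distrib .., sum_sub_distrib]
  linarith

theorem Matrix.abs_re_le_of_mulVec_eq_smul_of_transpose_eq_neg {ι : Type*} [Fintype ι]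
    {B : Matrix ι ι ℂ} (hB : Bᵀ = -B) {μ : ℂ} {v : ι → ℂ} (hv : v ≠ 0)
    (hBv : B *ᵥ v = μ • v) {R : ℝ} (hrow : ∀ j, ∑ k, |(B j k).im| ≤ R) :
    |μ.re| ≤ R := by
  have hcol : ∀ k, ∑ j, |(B j k).im| ≤ R := fun k => by
    refine le_of_eq_of_le (sum_congr rfl fun j _ => ?_) (hrow k)
    rw [← transpose_apply B k j, hB, neg_apply, Complex.neg_im, abs_neg]
  have hnorm : star v ⬝ᵥ v = ((∑ j, ‖v j‖ ^ 2 : ℝ) : ℂ) := by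
    simp [dotProduct, Complex.conj_mul']
  have hpos : 0 < ∑ j, ‖v j‖ ^ 2 := by
    obtain ⟨j, hj⟩ := Function.ne_iff.mp hv
    exact sum_pos' (fun _ _ => by positivity) ⟨j, mem_univ j, by positivity⟩
  have hre : μ.re * ∑ j, ‖v j‖ ^ 2 = -∑ j, ∑ k, (B j k).im * (star (v j) * v k).im := by
    rw [← re_star_dotProduct_mulVec_of_transpose_eq_neg hB, hBv, dotProduct_smul, smul_eq_mul,
      hnorm, Complex.re_mul_ofReal]
  have hbound : |μ.re| * ∑ j, ‖v j‖ ^ 2 ≤ R * ∑ j, ‖v j‖ ^ 2 := by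
    calc |μ.re| * ∑ j, ‖v j‖ ^ 2 = |∑ j, ∑ k, (B j k).im * (star (v j) * v k).im| := by
          rw [← abs_of_pos hpos, ← abs_mul, hre, abs_neg]
      _ ≤ ∑ j, ∑ k, |(B j k).im| * (‖v j‖ * ‖v k‖) := by
          refine (abs_sum_le_sum_abs _ _).trans (sum_le_sum fun j _ => ?_)
          refine (abs_sum_le_sum_abs _ _).trans (sum_le_sum fun k _ => ?_)
          rw [abs_mul]
          gcongr
          calc |(star (v j) * v k).im| ≤ ‖star (v j) * v k‖ := Complex.abs_im_le_norm _
            _ = ‖v j‖ * ‖v k‖ := by rw [norm_mul, norm_star]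
      _ ≤ R * ∑ j, ‖v j‖ ^ 2 :=
          sum_sum_mul_mul_le_of_sum_le _ _ (fun _ _ => abs_nonneg _) hrow hcol
  exact le_of_mul_le_mul_right hbound hpos

theorem sum_abs_le_two_of_eq_zero_of_not_adjacent {m : ℕ} (c : Fin m → Fin m → ℝ)
    (hc : ∀ j k : Fin m, (k : ℕ) ≠ j + 1 → (j : ℕ) ≠ k + 1 → c j k = 0)
    (hle : ∀ j k, |c j k| ≤ 1) (j : Fin m) : ∑ k, |c j k| ≤ 2 := by
  have hcard : ∀ p : Fin m → Prop, [DecidablePred p] → (∀ k k', p k → p k' → (k : ℕ) = k') →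
      ∑ k, (if p k then (1 : ℝ) else 0) ≤ 1 := fun p _ hp => by
    rw [sum_boole]
    exact_mod_cast card_le_one.mpr fun k hk k' hk' =>
      Fin.ext (hp k k' (mem_filter.mp hk).2 (mem_filter.mp hk').2)
  calc ∑ k, |c j k|
      ≤ ∑ k : Fin m, ((if (k : ℕ) = j + 1 then 1 else 0) + (if (j : ℕ) = k + 1 then 1 else 0)) := by
        refine sum_le_sum fun k _ => ?_
        by_cases h₁ : (k : ℕ) = j + 1
        · simp only [h₁, if_true]; have := hle j k; split_ifs <;> linarith
        by_cases h₂ : (j : ℕ) = k + 1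
        · simp only [h₂, if_true]; have := hle j k; split_ifs <;> linarith
        simp [h₁, h₂, hc j k h₁ h₂]
    _ ≤ 1 + 1 := by
        rw [sum_add_distrib]
        gcongr <;> apply hcard <;> intros <;> omega
    _ = 2 := by norm_num

theorem Matrix.apply_eq_zero_of_not_adjacent {R : Type*} [Ring R] [NoZeroDivisors R] [CharZero R]
    {m : ℕ} {A : Matrix (Fin m) (Fin m) R} (hskew : Aᵀ = -A)
    (htri : ∀ j k : Fin m, 1 < |(j : ℤ) - (k : ℤ)| → A j k = 0)
    {j k : Fin m} (h₁ : (k : ℕ) ≠ j + 1) (h₂ : (j : ℕ) ≠ k + 1) : A j k = 0 := by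
  by_cases hjk : j = k
  · subst hjk
    rw [← self_eq_neg, ← neg_apply, ← hskew, transpose_apply]
  · exact htri j k (by rw [Fin.ext_iff] at hjk; rw [lt_abs]; omega)

theorem Matrix.abs_re_mul_eigenvalue_le_two {m : ℕ} {A : Matrix (Fin m) (Fin m) ℂ}
    (hskew : Aᵀ = -A) (htri : ∀ j k : Fin m, 1 < |(j : ℤ) - (k : ℤ)| → A j k = 0)
    {u : ℂ} (hu : ∀ j k : Fin m, (k : ℕ) = j + 1 → |(u * A j k).im| ≤ 1)
    {μ : ℂ} {v : Fin m → ℂ} (hv : v ≠ 0) (hAv : A *ᵥ v = μ • v) : |(u * μ).re| ≤ 2 := by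
  refine abs_re_le_of_mulVec_eq_smul_of_transpose_eq_neg (B := u • A) ?_ hv ?_ fun j => ?_
  · rw [transpose_smul, hskew, smul_neg]
  · rw [smul_mulVec, hAv, smul_smul]
  refine sum_abs_le_two_of_eq_zero_of_not_adjacent (fun j k => (u * A j k).im) ?_ ?_ j
  · intro j k h₁ h₂
    simp [apply_eq_zero_of_not_adjacent hskew htri h₁ h₂]
  · intro j k
    by_cases h₁ : (k : ℕ) = j + 1
    · exact hu j k h₁
    by_cases h₂ : (j : ℕ) = k + 1
    · rw [← transpose_apply A k j, hskew, neg_apply, mul_neg, Complex.neg_im, abs_neg]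
      exact hu k j h₂
    simp [apply_eq_zero_of_not_adjacent hskew htri h₁ h₂]

theorem bohemian_skew_tridiagonal_diamond_general
    (m : ℕ) (A : Matrix (Fin m) (Fin m) ℂ)
    (hskew : A.transpose = -A)
    (htri : ∀ j k : Fin m, 1 < |(j : ℤ) - (k : ℤ)| → A j k = 0)
    (hsup : ∀ j k : Fin m, (k : ℕ) = (j : ℕ) + 1 →
      A j k = 1 ∨ A j k = Complex.I)
    (lam : ℂ)
    (heig : Matrix.det (lam • (1 : Matrix (Fin m) (Fin m) ℂ) - A) = 0) :
    |lam.re| + |lam.im| ≤ 2 := by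
  obtain ⟨v, hv, hker⟩ := exists_mulVec_eq_zero_iff.mpr heig
  have hAv : A *ᵥ v = lam • v := by
    rwa [sub_mulVec, smul_mulVec, one_mulVec, sub_eq_zero, eq_comm] at hker
  have hsum : |lam.re + lam.im| ≤ 2 := by
    simpa using abs_re_mul_eigenvalue_le_two hskew htri (u := 1 - Complex.I)
      (fun j k hjk => by rcases hsup j k hjk with h | h <;> simp [h]) hv hAv
  have hdiff : |lam.re - lam.im| ≤ 2 := by
    simpa [sub_eq_add_neg] using abs_re_mul_eigenvalue_le_two hskew htri (u := 1 + Complex.I)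
      (fun j k hjk => by rcases hsup j k hjk with h | h <;> simp [h]) hv hAv
  rw [abs_le] at hsum hdiff
  cases abs_cases lam.re <;> cases abs_cases lam.im <;> linarith

/-- Let `m ≥ 1` and let `A` be an `m × m` complex matrix that is
skew-symmetric (`Aᵀ = −A`) and tridiagonal (`A j k = 0` whenever `|j − k| > 1`),
and whose superdiagonal entries `A j (j+1)` all belong to `{1, i}`.
Then every eigenvalue `λ` of `A` satisfies `|Re λ| + |Im λ| ≤ 2`:
the eigenvalues are confined to a diamond (a square rotated by π/4). -/
theorem bohemian_skew_tridiagonal_diamond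
    (m : ℕ) (hm : 1 ≤ m) (A : Matrix (Fin m) (Fin m) ℂ)
    (hskew : A.transpose = -A)
    (htri : ∀ j k : Fin m, 1 < |(j : ℤ) - (k : ℤ)| → A j k = 0)
    (hsup : ∀ j k : Fin m, (k : ℕ) = (j : ℕ) + 1 →
      A j k = 1 ∨ A j k = Complex.I)
    (lam : ℂ)
    (heig : Matrix.det (lam • (1 : Matrix (Fin m) (Fin m) ℂ) - A) = 0) :
    |lam.re| + |lam.im| ≤ 2 :=
  bohemian_skew_tridiagonal_diamond_general m A hskew htri hsup lam heig
end

section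
/- Let m ≥ 1, let B > 0, and let H be an m×m complex upper Hessenberg matrix (H_{j,k} = 0 whenever j > k+1) with zero diagonal (H_{j,j} = 0 for all j), whose subdiagonal entries all have modulus one (|H_{j+1,j}| = 1 for 1 ≤ j ≤ m−1), and whose entries above the diagonal satisfy |H_{j,k}| ≤ B for all k > j. Then every eigenvalue λ of H satisfies |λ| ≤ 1 + 2√B. In particular this bound is independent of the dimension m. -/
/-!
Conjugating `H` by `diagonal (fun j => c ^ j)` with `c = 1 + √B` leaves the spectrum unchanged,
multiplies the subdiagonal by `c` and the entries `i` steps above the diagonal by `c⁻¹ ^ i`.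
Gershgorin's theorem for the conjugated matrix, whose diagonal is still zero, gives
`‖λ‖ ≤ c + B * ∑ i ≥ 1, c⁻¹ ^ i = c + B / (c - 1) = 1 + 2 √B`; this choice of `c` minimises
`c + B / (c - 1)`.
-/

open Finset

namespace Matrix

variable {n : Type*} [Fintype n] [DecidableEq n]

theorem charpoly_diagonal_mul_mul_diagonal_inv {K : Type*} [Field K] (A : Matrix n n K)
    {d : n → K} (hd : ∀ i, d i ≠ 0) : (diagonal d * A * diagonal d⁻¹).charpoly = A.charpoly := by
  have hinv : diagonal d⁻¹ * diagonal d = 1 := by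
    rw [diagonal_mul_diagonal, ← diagonal_one]
    exact congrArg diagonal (funext fun i => inv_mul_cancel₀ (hd i))
  rw [charpoly_mul_comm, ← Matrix.mul_assoc, hinv, Matrix.one_mul]

theorem exists_norm_sub_diag_le_sum_scaled_of_isRoot_charpoly {K : Type*} [NormedField K]
    (A : Matrix n n K) {d : n → K} (hd : ∀ i, d i ≠ 0) {μ : K} (hμ : A.charpoly.IsRoot μ) :
    ∃ k, ‖μ - A k k‖ ≤ ∑ j ∈ univ.erase k, ‖A k j‖ * (‖d k‖ / ‖d j‖) := by
  have hμ' : Module.End.HasEigenvalue (toLin' (diagonal d * A * diagonal d⁻¹)) μ := by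
    rwa [Module.End.hasEigenvalue_iff_isRoot_charpoly, charpoly_toLin',
      charpoly_diagonal_mul_mul_diagonal_inv A hd]
  obtain ⟨k, hk⟩ := eigenvalue_mem_ball hμ'
  have hdiag : (diagonal d * A * diagonal d⁻¹) k k = A k k := by
    rw [mul_diagonal, diagonal_mul, Pi.inv_apply, mul_comm (d k), mul_inv_cancel_right₀ (hd k)]
  have hrow (j : n) : ‖(diagonal d * A * diagonal d⁻¹) k j‖ = ‖A k j‖ * (‖d k‖ / ‖d j‖) := by
    rw [mul_diagonal, diagonal_mul, Pi.inv_apply, norm_mul, norm_mul, norm_inv]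
    ring
  rw [mem_closedBall_iff_norm, hdiag] at hk
  simp_rw [hrow] at hk
  exact ⟨k, hk⟩

end Matrix

theorem sum_filter_lt_pow_sub_le {m : ℕ} (k : Fin m) {q : ℝ} (hq₀ : 0 ≤ q) (hq₁ : q < 1) :
    ∑ j ∈ univ.filter (k < ·), q ^ ((j : ℕ) - k) ≤ q / (1 - q) := by
  have hinj : Set.InjOn (fun j : Fin m => (j : ℕ) - k - 1) (univ.filter (k < ·) : Finset _) := by
    intro x hx y hy hxy
    simp only [coe_filter, mem_univ, true_and, Set.mem_ofPred_eq] at hx hy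
    exact Fin.ext (by simp only at hxy; omega)
  calc ∑ j ∈ univ.filter (k < ·), q ^ ((j : ℕ) - k)
      = ∑ i ∈ (univ.filter (k < ·)).image (fun j : Fin m => (j : ℕ) - k - 1), q * q ^ i := by
        rw [sum_image hinj]
        refine sum_congr rfl fun j hj => ?_
        have : k < j := (mem_filter.1 hj).2
        rw [← pow_succ']
        congr 1
        omega
    _ ≤ ∑' i, q * q ^ i :=
        ((summable_geometric_of_lt_one hq₀ hq₁).mul_left q).sum_le_tsum _
          (fun _ _ => by positivity)
    _ = q / (1 - q) := by rw [tsum_mul_left, tsum_geometric_of_lt_one hq₀ hq₁, div_eq_mul_inv]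

theorem sum_erase_mul_pow_div_pow_le_of_hessenberg_row {m : ℕ} (a : Fin m → ℝ) (k : Fin m)
    {B c : ℝ} (hB : 0 ≤ B) (hc : 1 < c)
    (hzero : ∀ j : Fin m, (j : ℕ) + 1 < k → a j = 0)
    (hsub : ∀ j : Fin m, (k : ℕ) = (j : ℕ) + 1 → a j ≤ 1)
    (habove : ∀ j : Fin m, (k : ℕ) < j → a j ≤ B) :
    ∑ j ∈ univ.erase k, a j * (c ^ (k : ℕ) / c ^ (j : ℕ)) ≤ c + B / (c - 1) := by
  have hc₀ : 0 < c := by linarith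
  set g : Fin m → ℝ := fun j =>
    (if (k : ℕ) = (j : ℕ) + 1 then c else 0) + (if k < j then B * c⁻¹ ^ ((j : ℕ) - k) else 0)
  have hg : ∀ j, 0 ≤ g j := fun j => by
    simp only [g]
    split_ifs <;> positivity
  have hterm : ∀ j ∈ univ.erase k, a j * (c ^ (k : ℕ) / c ^ (j : ℕ)) ≤ g j := by
    intro j hj
    rcases lt_or_gt_of_ne (ne_of_mem_erase hj) with hlt | hgt
    · rcases Nat.lt_or_ge ((j : ℕ) + 1) k with hlt' | hge
      · rw [hzero j hlt', zero_mul]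
        exact hg j
      · have hkj : (k : ℕ) = (j : ℕ) + 1 := by have : (j : ℕ) < k := hlt; omega
        have hw : c ^ (k : ℕ) / c ^ (j : ℕ) = c := by
          rw [hkj, pow_succ, mul_div_cancel_left₀ _ (pow_ne_zero _ hc₀.ne')]
        simp only [g, hw, if_pos hkj, if_neg (lt_asymm hlt), add_zero]
        exact mul_le_of_le_one_left hc₀.le (hsub j hkj)
    · have hw : c ^ (k : ℕ) / c ^ (j : ℕ) = c⁻¹ ^ ((j : ℕ) - k) := by
        rw [inv_pow, pow_sub₀ c hc₀.ne' (le_of_lt hgt), ← div_eq_mul_inv, inv_div]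
      simp only [g, hw, if_neg (show (k : ℕ) ≠ (j : ℕ) + 1 by have : (k : ℕ) < j := hgt; omega),
        if_pos hgt, zero_add]
      exact mul_le_mul_of_nonneg_right (habove j hgt) (by positivity)
  have hsubdiag : ∑ j : Fin m, (if (k : ℕ) = (j : ℕ) + 1 then c else 0) ≤ c := by
    rw [← sum_filter, sum_const, nsmul_eq_mul]
    refine mul_le_of_le_one_left hc₀.le ?_
    exact_mod_cast card_le_one.2 fun x hx y hy =>
      Fin.ext (by simp only [mem_filter, mem_univ, true_and] at hx hy; omega)
  have htail : ∑ j ∈ univ.filter (k < ·), c⁻¹ ^ ((j : ℕ) - k) ≤ 1 / (c - 1) := by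
    refine (sum_filter_lt_pow_sub_le k (by positivity) (inv_lt_one_of_one_lt₀ hc)).trans_eq ?_
    field_simp
  calc ∑ j ∈ univ.erase k, a j * (c ^ (k : ℕ) / c ^ (j : ℕ))
      ≤ ∑ j ∈ univ.erase k, g j := sum_le_sum hterm
    _ ≤ ∑ j, g j := sum_le_sum_of_subset_of_nonneg (erase_subset k univ) fun j _ _ => hg j
    _ = ∑ j : Fin m, (if (k : ℕ) = (j : ℕ) + 1 then c else 0)
          + B * ∑ j ∈ univ.filter (k < ·), c⁻¹ ^ ((j : ℕ) - k) := by
        rw [sum_add_distrib, mul_sum, sum_filter]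
    _ ≤ c + B * (1 / (c - 1)) := by gcongr
    _ = c + B / (c - 1) := by rw [mul_one_div]

theorem unit_upperHessenberg_zeroDiag_eigenvalue_bound_general
    (m : ℕ) (B : ℝ) (hB : 0 < B)
    (H : Matrix (Fin m) (Fin m) ℂ)
    (hhess : ∀ j k : Fin m, (k : ℕ) + 1 < (j : ℕ) → H j k = 0)
    (hdiag : ∀ j : Fin m, H j j = 0)
    (hsub : ∀ j k : Fin m, (j : ℕ) = (k : ℕ) + 1 → ‖H j k‖ = 1)
    (habove : ∀ j k : Fin m, (j : ℕ) < (k : ℕ) → ‖H j k‖ ≤ B)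
    (lam : ℂ)
    (heig : Matrix.det (lam • (1 : Matrix (Fin m) (Fin m) ℂ) - H) = 0) :
    ‖lam‖ ≤ 1 + 2 * Real.sqrt B := by
  have hsqrt : 0 < √B := Real.sqrt_pos.2 hB
  set c := 1 + √B
  have hroot : H.charpoly.IsRoot lam := by
    rwa [Polynomial.IsRoot, Matrix.eval_charpoly, Matrix.scalar_apply,
      ← Matrix.smul_one_eq_diagonal]
  obtain ⟨k, hk⟩ := H.exists_norm_sub_diag_le_sum_scaled_of_isRoot_charpoly
    (d := fun j => (c : ℂ) ^ (j : ℕ)) (fun j => pow_ne_zero _ (by norm_cast; positivity)) hroot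
  have hweight (j : Fin m) : ‖(c : ℂ) ^ (j : ℕ)‖ = c ^ (j : ℕ) := by
    rw [norm_pow, Complex.norm_real, Real.norm_of_nonneg (by positivity)]
  simp only [hdiag, sub_zero, hweight] at hk
  calc ‖lam‖ ≤ c + B / (c - 1) :=
        hk.trans <| sum_erase_mul_pow_div_pow_le_of_hessenberg_row (fun j => ‖H k j‖) k hB.le
          (by linarith) (fun j hj => by simp [hhess k j hj]) (fun j hj => (hsub k j hj).le)
          (habove k)
    _ = 1 + 2 * √B := by
        rw [show c - 1 = √B by ring, Real.div_sqrt]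
        ring

/-- Let `m ≥ 1`, `B > 0`, and let `H` be an `m × m` complex
upper Hessenberg matrix (`H j k = 0` whenever `j > k + 1`) with zero diagonal,
whose subdiagonal entries all have modulus one, and whose entries above the
diagonal satisfy `|H j k| ≤ B` for `k > j`.  Then every eigenvalue `λ` of `H`
satisfies `|λ| ≤ 1 + 2√B`; in particular the bound is independent of `m`. -/
theorem unit_upperHessenberg_zeroDiag_eigenvalue_bound
    (m : ℕ) (hm : 1 ≤ m) (B : ℝ) (hB : 0 < B)
    (H : Matrix (Fin m) (Fin m) ℂ)
    (hhess : ∀ j k : Fin m, (k : ℕ) + 1 < (j : ℕ) → H j k = 0)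
    (hdiag : ∀ j : Fin m, H j j = 0)
    (hsub : ∀ j k : Fin m, (j : ℕ) = (k : ℕ) + 1 → ‖H j k‖ = 1)
    (habove : ∀ j k : Fin m, (j : ℕ) < (k : ℕ) → ‖H j k‖ ≤ B)
    (lam : ℂ)
    (heig : Matrix.det (lam • (1 : Matrix (Fin m) (Fin m) ℂ) - H) = 0) :
    ‖lam‖ ≤ 1 + 2 * Real.sqrt B :=
  unit_upperHessenberg_zeroDiag_eigenvalue_bound_general m B hB H hhess hdiag hsub habove lam heig
end

section
/- Let m ≥ 1, let B ≥ 0, and let H be an m×m complex upper Hessenberg matrix (H_{j,k} = 0 whenever j > k+1) with zero diagonal (H_{j,j} = 0 for all j), whose subdiagonal entries all have modulus one (|H_{j+1,j}| = 1 for 1 ≤ j ≤ m−1), and whose entries above the diagonal satisfy |H_{j,k}| ≤ B for all k > j. Then for every real number r > 1, every eigenvalue λ of H satisfies |λ| ≤ r + B/(r − 1). (This follows by applying the Gerschgorin disk theorem to D H D⁻¹, where D = diag(1, r, r², …, r^{m−1}).) -/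
/-!
Conjugating by `D = diagonal (1, r, …, r^{m-1})` leaves the characteristic polynomial unchanged
and multiplies the entry `(k, j)` by `r^{k-j}`. In row `k` of `D H D⁻¹` the diagonal entry
vanishes, the subdiagonal entry has modulus `r`, and the entries to the right of the diagonal
are bounded by `B r⁻¹, B r⁻², …`; so each Gershgorin radius is at most
`r + B ∑_{i ≥ 1} r⁻ⁱ = r + B / (r - 1)`.
-/

open Finset

namespace Matrix

variable {K n : Type*} [NormedField K] [Fintype n] [DecidableEq n]

theorem exists_norm_sub_diag_le_of_det_eq_zero {A : Matrix n n K} {μ : K}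
    (h : det (μ • 1 - A) = 0) : ∃ k, ‖μ - A k k‖ ≤ ∑ j ∈ univ.erase k, ‖A k j‖ := by
  by_contra! hlt
  refine det_ne_zero_of_sum_row_lt_diag (fun k => ?_) h
  have hoff : ∀ j ∈ univ.erase k, ‖(μ • 1 - A) k j‖ = ‖A k j‖ := fun j hj => by
    simp [one_apply_ne' (ne_of_mem_erase hj)]
  have hdiag : (μ • 1 - A) k k = μ - A k k := by simp
  rw [sum_congr rfl hoff, hdiag]
  exact hlt k

/-- Gershgorin's theorem applied to `D * A * D⁻¹` with `D = diagonal d`. -/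
theorem exists_norm_sub_diag_le_weighted_of_det_eq_zero {A : Matrix n n K} {μ : K}
    (d : n → K) (hd : ∀ i, d i ≠ 0) (h : det (μ • 1 - A) = 0) :
    ∃ k, ‖μ - A k k‖ ≤ ∑ j ∈ univ.erase k, ‖d k‖ * ‖A k j‖ / ‖d j‖ := by
  have hdd : diagonal d * diagonal d⁻¹ = 1 := by
    rw [diagonal_mul_diagonal, ← diagonal_one]
    exact congrArg diagonal (funext fun i => mul_inv_cancel₀ (hd i))
  have hdd' : diagonal d⁻¹ * diagonal d = 1 := by
    rw [diagonal_mul_diagonal, ← diagonal_one]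
    exact congrArg diagonal (funext fun i => inv_mul_cancel₀ (hd i))
  have hconj : μ • 1 - diagonal d * A * diagonal d⁻¹
      = diagonal d * (μ • 1 - A) * diagonal d⁻¹ := by
    rw [Matrix.mul_sub, Matrix.sub_mul, Matrix.mul_smul, Matrix.smul_mul, Matrix.mul_one, hdd]
  obtain ⟨k, hk⟩ := exists_norm_sub_diag_le_of_det_eq_zero (A := diagonal d * A * diagonal d⁻¹)
    (μ := μ) (by rw [hconj, det_conj_of_mul_eq_one hdd hdd', h])
  refine ⟨k, ?_⟩
  simpa [diagonal_mul, mul_diagonal, mul_inv_cancel_right₀ (hd k), mul_comm, div_eq_mul_inv]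
    using hk

end Matrix

theorem sum_Ioo_pow_mul_inv_pow_le {r : ℝ} (hr : 1 < r) (k m : ℕ) :
    ∑ j ∈ Ioo k m, r ^ k * r⁻¹ ^ j ≤ (r - 1)⁻¹ := by
  have hr0 : 0 < r := zero_lt_one.trans hr
  rw [← mul_sum, ← Ico_add_one_left_eq_Ioo]
  calc r ^ k * ∑ j ∈ Ico (k + 1) m, r⁻¹ ^ j ≤ r ^ k * (r⁻¹ ^ (k + 1) / (1 - r⁻¹)) :=
        mul_le_mul_of_nonneg_left
          (geom_sum_Ico_le_of_lt_one (inv_nonneg.2 hr0.le) (inv_lt_one_of_one_lt₀ hr)) (by positivity)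
    _ = (r - 1)⁻¹ := by
        have : r - 1 ≠ 0 := (sub_pos.2 hr).ne'
        rw [inv_pow]
        field_simp
        ring

section UnitHessenberg

variable {m : ℕ} {B r : ℝ} {H : Matrix (Fin m) (Fin m) ℂ}
  (hhess : ∀ j k : Fin m, (k : ℕ) + 1 < (j : ℕ) → H j k = 0)
  (hdiag : ∀ j : Fin m, H j j = 0)
  (hsub : ∀ j k : Fin m, (j : ℕ) = (k : ℕ) + 1 → ‖H j k‖ = 1)
  (habove : ∀ j k : Fin m, (j : ℕ) < (k : ℕ) → ‖H j k‖ ≤ B)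
include hhess hdiag hsub habove

/-- `k - 1` is truncated: for `k = 0` the bound is merely wasteful at `j = 0`. -/
theorem weighted_norm_entry_le_of_unitHessenberg (hr : 1 < r) (k j : Fin m) :
    r ^ (k : ℕ) * ‖H k j‖ / r ^ (j : ℕ) ≤
      (if (j : ℕ) = k - 1 then r else 0) +
        if (k : ℕ) < j then B * (r ^ (k : ℕ) * r⁻¹ ^ (j : ℕ)) else 0 := by
  have hr0 : 0 < r := zero_lt_one.trans hr
  rcases lt_trichotomy ((j : ℕ) + 1) k with hlow | hsubdiag | hup
  · rw [if_neg (by omega), if_neg (by omega), hhess k j hlow]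
    simp
  · rw [if_pos (by omega), if_neg (by omega), hsub k j hsubdiag.symm, ← hsubdiag, pow_succ]
    field_simp
    simp
  · rcases (Nat.lt_succ_iff.1 hup).eq_or_lt with hkj | hkj
    · obtain rfl := Fin.ext hkj
      rw [if_neg (lt_irrefl _), hdiag, norm_zero, mul_zero, zero_div, add_zero]
      split_ifs <;> linarith
    · rw [if_neg (by omega), if_pos hkj, zero_add, inv_pow, ← div_eq_mul_inv, ← mul_div_assoc,
        mul_comm B]
      gcongr
      exact habove k j hkj

theorem weighted_row_sum_le_of_unitHessenberg (hB : 0 ≤ B) (hr : 1 < r) (k : Fin m) :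
    ∑ j, r ^ (k : ℕ) * ‖H k j‖ / r ^ (j : ℕ) ≤ r + B / (r - 1) := by
  have hr0 : 0 < r := zero_lt_one.trans hr
  have hfilter : (range m).filter (fun j => (k : ℕ) < j) = Ioo (k : ℕ) m := by
    ext j
    simp only [mem_filter, mem_range, mem_Ioo]
    omega
  calc ∑ j, r ^ (k : ℕ) * ‖H k j‖ / r ^ (j : ℕ)
      ≤ ∑ j : Fin m, ((if (j : ℕ) = k - 1 then r else 0) +
          if (k : ℕ) < j then B * (r ^ (k : ℕ) * r⁻¹ ^ (j : ℕ)) else 0) :=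
        sum_le_sum fun j _ =>
          weighted_norm_entry_le_of_unitHessenberg hhess hdiag hsub habove hr k j
    _ = (if (k : ℕ) - 1 ∈ range m then r else 0) +
          B * ∑ j ∈ Ioo (k : ℕ) m, r ^ (k : ℕ) * r⁻¹ ^ j := by
        rw [Fin.sum_univ_eq_sum_range (fun j => (if j = (k : ℕ) - 1 then r else 0) +
          if (k : ℕ) < j then B * (r ^ (k : ℕ) * r⁻¹ ^ j) else 0), sum_add_distrib,
          sum_ite_eq', ← sum_filter, hfilter, mul_sum]
    _ ≤ r + B * (r - 1)⁻¹ := by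
        gcongr
        · split_ifs <;> linarith
        · exact sum_Ioo_pow_mul_inv_pow_le hr k m

end UnitHessenberg

theorem unit_upperHessenberg_zeroDiag_gerschgorin_bound_general
    (m : ℕ) (B : ℝ) (hB : 0 ≤ B)
    (H : Matrix (Fin m) (Fin m) ℂ)
    (hhess : ∀ j k : Fin m, (k : ℕ) + 1 < (j : ℕ) → H j k = 0)
    (hdiag : ∀ j : Fin m, H j j = 0)
    (hsub : ∀ j k : Fin m, (j : ℕ) = (k : ℕ) + 1 → ‖H j k‖ = 1)
    (habove : ∀ j k : Fin m, (j : ℕ) < (k : ℕ) → ‖H j k‖ ≤ B)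
    (r : ℝ) (hr : 1 < r)
    (lam : ℂ)
    (heig : Matrix.det (lam • (1 : Matrix (Fin m) (Fin m) ℂ) - H) = 0) :
    ‖lam‖ ≤ r + B / (r - 1) := by
  have hr0 : 0 < r := zero_lt_one.trans hr
  obtain ⟨k, hk⟩ := Matrix.exists_norm_sub_diag_le_weighted_of_det_eq_zero
    (fun j : Fin m => (r : ℂ) ^ (j : ℕ)) (fun j => pow_ne_zero _ (by exact_mod_cast hr0.ne')) heig
  rw [hdiag, sub_zero] at hk
  calc ‖lam‖ ≤ ∑ j ∈ univ.erase k, ‖(r : ℂ) ^ (k : ℕ)‖ * ‖H k j‖ / ‖(r : ℂ) ^ (j : ℕ)‖ := hk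
    _ ≤ ∑ j, ‖(r : ℂ) ^ (k : ℕ)‖ * ‖H k j‖ / ‖(r : ℂ) ^ (j : ℕ)‖ :=
        sum_le_sum_of_subset_of_nonneg (erase_subset _ _) fun _ _ _ => by positivity
    _ = ∑ j, r ^ (k : ℕ) * ‖H k j‖ / r ^ (j : ℕ) := by
        simp only [norm_pow, Complex.norm_real, Real.norm_eq_abs, abs_of_pos hr0]
    _ ≤ r + B / (r - 1) :=
        weighted_row_sum_le_of_unitHessenberg hhess hdiag hsub habove hB hr k

/-- Let `m ≥ 1`, `B ≥ 0`, and let `H` be an `m × m` complex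
upper Hessenberg matrix with zero diagonal, whose subdiagonal entries all have
modulus one, and whose entries above the diagonal satisfy `|H j k| ≤ B` for
`k > j`.  Then for every real `r > 1`, every eigenvalue `λ` of `H` satisfies
`|λ| ≤ r + B/(r − 1)`  (Gerschgorin applied to `D H D⁻¹`, `D = diag(1,r,…,r^{m−1})`). -/
theorem unit_upperHessenberg_zeroDiag_gerschgorin_bound
    (m : ℕ) (hm : 1 ≤ m) (B : ℝ) (hB : 0 ≤ B)
    (H : Matrix (Fin m) (Fin m) ℂ)
    (hhess : ∀ j k : Fin m, (k : ℕ) + 1 < (j : ℕ) → H j k = 0)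
    (hdiag : ∀ j : Fin m, H j j = 0)
    (hsub : ∀ j k : Fin m, (j : ℕ) = (k : ℕ) + 1 → ‖H j k‖ = 1)
    (habove : ∀ j k : Fin m, (j : ℕ) < (k : ℕ) → ‖H j k‖ ≤ B)
    (r : ℝ) (hr : 1 < r)
    (lam : ℂ)
    (heig : Matrix.det (lam • (1 : Matrix (Fin m) (Fin m) ℂ) - H) = 0) :
    ‖lam‖ ≤ r + B / (r - 1) :=
  unit_upperHessenberg_zeroDiag_gerschgorin_bound_general m B hB H hhess hdiag hsub habove r hr lam
    heig
end
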